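/- Let λ₁, …, λ_{n+1} be positive real numbers with product P = λ₁⋯λ_{n+1} and sum S = λ₁+⋯+λ_{n+1}. Then ∑ᵢ λᵢ⁻¹ ≥ S^{1/n} · P^{-1/n}. -/
import Mathlib


theorem stmt_5 (n : ℕ) (hn : 1 ≤ n) (lam : Fin (n + 1) → ℝ) (hpos : ∀ i, 0 < lam i) :
    ∑ i, (lam i)⁻¹ ≥
      (∑ i, lam i) ^ ((1:ℝ) / n) * (∏ i, lam i) ^ (-(1:ℝ) / n) := by
  set T := ∑ i, (lam i)⁻¹ with hT
  set S := ∑ i, lam i with hS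
  set P := ∏ i, lam i with hP
  have hTpos : 0 < T := Finset.sum_pos (fun i _ => inv_pos.mpr (hpos i)) ⟨0, Finset.mem_univ 0⟩
  have hSpos : 0 < S := Finset.sum_pos (fun i _ => hpos i) ⟨0, Finset.mem_univ 0⟩
  have hPpos : 0 < P := Finset.prod_pos (fun i _ => hpos i)
  have hx : ∀ i : Fin (n+1), (lam i)⁻¹ ≤ T :=
    fun i => Finset.single_le_sum (f := fun j => (lam j)⁻¹)
      (fun j _ => (inv_pos.mpr (hpos j)).le) (Finset.mem_univ i)
  have hone : (1 : Fin (n+1)) ≠ 0 := by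
    simp [Fin.ext_iff, Nat.mod_eq_of_lt (show 1 < n+1 by omega)]
  have hsucc : ∀ i : Fin (n+1), i + 1 ≠ i := by
    intro i h
    exact hone (add_eq_left.mp h)
  -- key inequality : S ≤ T^n * P
  have key : S ≤ T ^ n * P := by
    have h1 : ∀ i : Fin (n+1),
        ∏ j ∈ Finset.univ.erase i, (lam j)⁻¹ ≤ (lam (i+1))⁻¹ * T ^ (n-1) := by
      intro i
      have hmem : (i+1) ∈ Finset.univ.erase i := Finset.mem_erase.mpr ⟨hsucc i, Finset.mem_univ _⟩
      rw [← Finset.mul_prod_erase _ _ hmem]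
      have hcard : ((Finset.univ.erase i).erase (i+1)).card = n - 1 := by
        rw [Finset.card_erase_of_mem hmem, Finset.card_erase_of_mem (Finset.mem_univ i)]
        simp
      have hb : ∏ j ∈ (Finset.univ.erase i).erase (i+1), (lam j)⁻¹ ≤ T ^ (n-1) := by
        calc ∏ j ∈ (Finset.univ.erase i).erase (i+1), (lam j)⁻¹
            ≤ ∏ _j ∈ (Finset.univ.erase i).erase (i+1), T :=
              Finset.prod_le_prod (fun j _ => (inv_pos.mpr (hpos j)).le) (fun j _ => hx j)
          _ = T ^ ((Finset.univ.erase i).erase (i+1)).card := Finset.prod_const T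
          _ = T ^ (n-1) := by rw [hcard]
      exact mul_le_mul_of_nonneg_left hb (inv_pos.mpr (hpos (i+1))).le
    have h2 : ∀ i : Fin (n+1), lam i * ∏ j, (lam j)⁻¹ = ∏ j ∈ Finset.univ.erase i, (lam j)⁻¹ := by
      intro i
      rw [← Finset.mul_prod_erase _ _ (Finset.mem_univ i), ← mul_assoc,
        mul_inv_cancel₀ (hpos i).ne', one_mul]
    have h3 : S * ∏ j, (lam j)⁻¹ ≤ T ^ n := by
      rw [hS, Finset.sum_mul]
      calc ∑ i, lam i * ∏ j, (lam j)⁻¹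
          = ∑ i : Fin (n+1), ∏ j ∈ Finset.univ.erase i, (lam j)⁻¹ := by
            exact Finset.sum_congr rfl (fun i _ => h2 i)
        _ ≤ ∑ i : Fin (n+1), (lam (i+1))⁻¹ * T ^ (n-1) :=
            Finset.sum_le_sum (fun i _ => h1 i)
        _ = (∑ i : Fin (n+1), (lam (i+1))⁻¹) * T ^ (n-1) := by rw [Finset.sum_mul]
        _ = T * T ^ (n-1) := by
            congr 1
            exact Fintype.sum_equiv (Equiv.addRight (1 : Fin (n+1))) _ _ (fun i => rfl)
        _ = T ^ n := by
            rw [← pow_succ']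
            congr 1
            omega
    have hprodinv : ∏ j, (lam j)⁻¹ = P⁻¹ := by
      rw [hP, ← Finset.prod_inv_distrib]
    rw [hprodinv] at h3
    calc S = S * P⁻¹ * P := by field_simp
      _ ≤ T ^ n * P := mul_le_mul_of_nonneg_right h3 hPpos.le
  -- now the rpow manipulations
  have hn' : (n : ℝ) ≠ 0 := Nat.cast_ne_zero.mpr (by omega)
  have hdiv : S / P ≤ T ^ n := (div_le_iff₀ hPpos).mpr key
  have hr : (S / P) ^ ((1:ℝ)/n) ≤ (T ^ n) ^ ((1:ℝ)/n) :=
    Real.rpow_le_rpow (div_nonneg hSpos.le hPpos.le) hdiv (by positivity)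
  have hTn : (T ^ n : ℝ) ^ ((1:ℝ)/n) = T := by
    rw [← Real.rpow_natCast T n, ← Real.rpow_mul hTpos.le, mul_one_div,
      div_self hn', Real.rpow_one]
  have hRHS : S ^ ((1:ℝ)/n) * P ^ (-(1:ℝ)/n) = (S / P) ^ ((1:ℝ)/n) := by
    rw [neg_div, Real.rpow_neg hPpos.le, Real.div_rpow hSpos.le hPpos.le, ← div_eq_mul_inv]
  rw [ge_iff_le, hRHS]
  calc (S / P) ^ ((1:ℝ)/n) ≤ (T ^ n) ^ ((1:ℝ)/n) := hr
    _ = T := hTn
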